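/- Let (X, ℬ) be a measurable space and let κ be a Markov transition kernel on X (so κ(x, X) = 1 for every x ∈ X). If a probability measure m on X is an extreme element of the set ℛ of all reversible probability measures for κ, then m is an extreme element of the set ℐ of all invariant probability measures for κ. -/

import Mathlib

open MeasureTheory ProbabilityTheory

variable {X : Type*} [MeasurableSpace X]

/-- A function is bounded measurable. -/
def BddMeasurable {X : Type*} [MeasurableSpace X] (f : X → ℝ) : Prop :=
  Measurable f ∧ ∃ C : ℝ, ∀ x, |f x| ≤ C

/-- The transition operator `T f (x) = ∫ f(y) κ(x, dy)`. -/
noncomputable def Tker {X : Type*} [MeasurableSpace X] (κ : Kernel X X) (f : X → ℝ) :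
    X → ℝ :=
  fun x => ∫ y, f y ∂(κ x)

/-- `m` is an invariant measure: `∫ T f dm = ∫ f dm` for all bounded measurable `f`. -/
def IsInvariantMeas {X : Type*} [MeasurableSpace X] (κ : Kernel X X) (m : Measure X) : Prop :=
  ∀ f : X → ℝ, BddMeasurable f → ∫ x, Tker κ f x ∂m = ∫ x, f x ∂m

/-- `m` is a reversible measure: `∫ (T f) g dm = ∫ f (T g) dm`
for all bounded measurable `f, g`. -/
def IsReversibleMeas {X : Type*} [MeasurableSpace X] (κ : Kernel X X) (m : Measure X) : Prop :=
  ∀ f g : X → ℝ, BddMeasurable f → BddMeasurable g →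
    ∫ x, Tker κ f x * g x ∂m = ∫ x, f x * Tker κ g x ∂m

/-- `m` is a conservative measure: `∫ (T 1) g dm = ∫ g dm`
for all bounded measurable `g`, where `T 1 (x) = κ(x, X)`. -/
def IsConservativeMeas {X : Type*} [MeasurableSpace X] (κ : Kernel X X) (m : Measure X) :
    Prop :=
  ∀ g : X → ℝ, BddMeasurable g → ∫ x, (κ x Set.univ).toReal * g x ∂m = ∫ x, g x ∂m

/-- `m` is an extreme element of a set `C` of measures: `m ∈ C` and whenever
`m = (1 - t) • m₀ + t • m₁` with `t ∈ (0,1)` and `m₀, m₁ ∈ C`, one has `m₀ = m₁`. -/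
def IsExtremeElem {X : Type*} [MeasurableSpace X] (C : Set (Measure X)) (m : Measure X) :
    Prop :=
  m ∈ C ∧ ∀ t : ℝ, t ∈ Set.Ioo (0 : ℝ) 1 → ∀ m₀ m₁ : Measure X, m₀ ∈ C → m₁ ∈ C →
    m = ENNReal.ofReal (1 - t) • m₀ + ENNReal.ofReal t • m₁ → m₀ = m₁

/-! If `m` is reversible and `m = (1 - t) • m₀ + t • m₁` with `m₀, m₁` invariant, then
`mᵢ ≤ c • m`, so `mᵢ = H • m` for a bounded density `H`. Invariance of `mᵢ` together with
reversibility of `m` gives `T H = H` `m`-a.e. Then the energy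
`∫∫ (H y - H x)² κ(x, dy) m(dx) = ∫ (T (H²) - H²) dm` vanishes by invariance of `m`, so `H` is
`κ(x, ·)`-a.e. constant for `m`-a.e. `x`. Hence `T (g H) = H · T g` `m`-a.e., which transfers
reversibility from `m` to `H • m`; extremality of `m` among reversible measures forces `m₀ = m₁`. -/

open scoped ENNReal

namespace BddMeasurable

variable {f g : X → ℝ}

lemma exists_nonneg_bound (hf : BddMeasurable f) : ∃ C : ℝ, 0 ≤ C ∧ ∀ x, |f x| ≤ C := by
  obtain ⟨_, C, hC⟩ := hf
  exact ⟨max C 0, le_max_right _ _, fun x => (hC x).trans (le_max_left _ _)⟩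

lemma integrable (hf : BddMeasurable f) (μ : Measure X) [IsFiniteMeasure μ] :
    Integrable f μ := by
  obtain ⟨hmeas, C, hC⟩ := hf
  exact ⟨hmeas.aestronglyMeasurable,
    HasFiniteIntegral.of_bounded (C := C)
      (Filter.Eventually.of_forall fun x => by simpa using hC x)⟩

lemma const (c : ℝ) : BddMeasurable (fun _ : X => c) :=
  ⟨measurable_const, |c|, fun _ => le_rfl⟩

lemma mul (hf : BddMeasurable f) (hg : BddMeasurable g) :
    BddMeasurable (fun x => f x * g x) := by
  obtain ⟨C, hC0, hC⟩ := hf.exists_nonneg_bound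
  obtain ⟨D, -, hD⟩ := hg.exists_nonneg_bound
  exact ⟨hf.1.mul hg.1, C * D, fun x => by
    rw [abs_mul]; exact mul_le_mul (hC x) (hD x) (abs_nonneg _) hC0⟩

lemma sub (hf : BddMeasurable f) (hg : BddMeasurable g) :
    BddMeasurable (fun x => f x - g x) := by
  obtain ⟨C, -, hC⟩ := hf.exists_nonneg_bound
  obtain ⟨D, -, hD⟩ := hg.exists_nonneg_bound
  exact ⟨hf.1.sub hg.1, C + D, fun x => (abs_sub _ _).trans (add_le_add (hC x) (hD x))⟩

lemma tker (κ : Kernel X X) [IsMarkovKernel κ] (hf : BddMeasurable f) :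
    BddMeasurable (Tker κ f) := by
  obtain ⟨C, -, hC⟩ := hf.exists_nonneg_bound
  refine ⟨(StronglyMeasurable.integral_kernel_prod_right'
    (f := fun p : X × X => f p.2) (hf.1.comp measurable_snd).stronglyMeasurable).measurable,
    C, fun x => ?_⟩
  simpa [Tker] using norm_integral_le_of_norm_le_const (μ := κ x) (f := f) (C := C)
    (Filter.Eventually.of_forall fun y => by simpa using hC y)

end BddMeasurable

lemma MeasureTheory.Measure.le_inv_smul_of_eq_smul_add {m m₀ m₁ : Measure X} {a b : ℝ≥0∞} (ha : a ≠ 0)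
    (ha' : a ≠ ∞) (hdec : m = a • m₀ + b • m₁) : m₀ ≤ a⁻¹ • m := by
  have h : a • m₀ ≤ m := hdec ▸ Measure.le_add_right le_rfl
  calc m₀ = a⁻¹ • a • m₀ := by rw [smul_smul, ENNReal.inv_mul_cancel ha ha', one_smul]
    _ ≤ a⁻¹ • m := by gcongr

lemma MeasureTheory.Measure.exists_bddMeasurable_density_of_le_smul {μ m : Measure X} [SigmaFinite μ]
    [SigmaFinite m] {c : ℝ≥0∞} (hc : c ≠ ∞) (hle : μ ≤ c • m) :
    ∃ H : X → ℝ, BddMeasurable H ∧ ∀ f : X → ℝ, ∫ x, f x ∂μ = ∫ x, f x * H x ∂m := by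
  have hac : μ ≪ m := Measure.absolutelyContinuous_of_le_smul hle
  have hbd : μ.rnDeriv m ≤ᵐ[m] fun _ => c := by
    refine ae_le_of_forall_setLIntegral_le_of_sigmaFinite (μ.measurable_rnDeriv m)
      fun s _ _ => ?_
    rw [Measure.setLIntegral_rnDeriv hac s, setLIntegral_const]
    simpa using hle s
  -- truncating at `c` changes the density only on an `m`-null set, but makes it bounded
  refine ⟨fun x => min (μ.rnDeriv m x).toReal c.toReal,
    ⟨(μ.measurable_rnDeriv m).ennreal_toReal.min measurable_const, c.toReal, fun x => ?_⟩,
    fun f => ?_⟩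
  · rw [abs_of_nonneg (le_min ENNReal.toReal_nonneg ENNReal.toReal_nonneg)]
    exact min_le_right _ _
  · rw [← integral_rnDeriv_smul hac]
    refine integral_congr_ae ?_
    filter_upwards [hbd] with x hx
    rw [min_eq_left (ENNReal.toReal_mono hc hx), smul_eq_mul, mul_comm]

lemma ae_eq_of_forall_integral_mul_eq {m : Measure X} [IsFiniteMeasure m] {u v : X → ℝ}
    (hu : BddMeasurable u) (hv : BddMeasurable v)
    (huv : ∀ f, BddMeasurable f → ∫ x, f x * u x ∂m = ∫ x, f x * v x ∂m) : u =ᵐ[m] v := by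
  have hd := hu.sub hv
  have hsq : ∫ x, (u x - v x) * (u x - v x) ∂m = 0 := by
    simp_rw [mul_sub]
    rw [integral_sub ((hd.mul hu).integrable m) ((hd.mul hv).integrable m), huv _ hd, sub_self]
  filter_upwards [(integral_eq_zero_iff_of_nonneg (fun x => mul_self_nonneg _)
    ((hd.mul hd).integrable m)).mp hsq] with x hx
  exact sub_eq_zero.mp (mul_self_eq_zero.mp hx)

section Kernel

variable {κ : Kernel X X} {m : Measure X} {H : X → ℝ}

lemma tker_mul_ae_eq_of_ae_ae_eq (hloc : ∀ᵐ x ∂m, ∀ᵐ y ∂κ x, H y = H x) (g : X → ℝ) :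
    Tker κ (fun y => g y * H y) =ᵐ[m] fun x => Tker κ g x * H x := by
  filter_upwards [hloc] with x hx
  rw [Tker, Tker, ← integral_mul_const]
  exact integral_congr_ae (hx.mono fun y hy => by simp only [hy])

variable [IsMarkovKernel κ]

lemma tker_const (c : ℝ) (x : X) : Tker κ (fun _ => c) x = c := by
  simp [Tker]

lemma IsReversibleMeas.isInvariantMeas (hrev : IsReversibleMeas κ m) : IsInvariantMeas κ m := by
  intro f hf
  simpa [tker_const] using hrev f (fun _ => 1) hf (BddMeasurable.const 1)

lemma integral_sub_sq_eq_tker (hH : BddMeasurable H) (x : X) :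
    ∫ y, (H y - H x) ^ 2 ∂κ x = Tker κ (fun y => H y ^ 2) x - 2 * H x * Tker κ H x + H x ^ 2 := by
  have hH2 : Integrable (fun y => H y ^ 2) (κ x) := by
    simpa [sq] using (hH.mul hH).integrable (κ x)
  have hlin : Integrable (fun y => 2 * H x * H y) (κ x) := (hH.integrable (κ x)).const_mul _
  have hexpand : ∀ y, (H y - H x) ^ 2 = (H y ^ 2 - 2 * H x * H y) + H x ^ 2 := fun y => by ring
  simp_rw [hexpand]
  rw [integral_add (f := fun y => H y ^ 2 - 2 * H x * H y) (hH2.sub hlin) (integrable_const _),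
    integral_sub hH2 hlin, integral_const_mul, integral_const]
  simp [Tker]

lemma IsInvariantMeas.ae_ae_eq_of_tker_ae_eq [IsFiniteMeasure m] (hinv : IsInvariantMeas κ m)
    (hH : BddMeasurable H) (hTH : Tker κ H =ᵐ[m] H) :
    ∀ᵐ x ∂m, ∀ᵐ y ∂κ x, H y = H x := by
  have hH2 : BddMeasurable fun y => H y ^ 2 := by simpa [sq] using hH.mul hH
  have henergy : (fun x => ∫ y, (H y - H x) ^ 2 ∂κ x)
      =ᵐ[m] fun x => Tker κ (fun y => H y ^ 2) x - H x ^ 2 := by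
    filter_upwards [hTH] with x hx
    rw [integral_sub_sq_eq_tker hH, hx]
    ring
  have hint : Integrable (fun x => ∫ y, (H y - H x) ^ 2 ∂κ x) m :=
    (((hH2.tker κ).sub hH2).integrable m).congr henergy.symm
  have hzero : ∫ x, ∫ y, (H y - H x) ^ 2 ∂κ x ∂m = 0 := by
    rw [integral_congr_ae henergy,
      integral_sub ((hH2.tker κ).integrable m) (hH2.integrable m), hinv _ hH2, sub_self]
  filter_upwards [(integral_eq_zero_iff_of_nonneg
    (fun x => integral_nonneg fun y => sq_nonneg _) hint).mp hzero] with x hx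
  have hsq : Integrable (fun y => (H y - H x) ^ 2) (κ x) := by
    simpa [sq] using ((hH.sub (.const _)).mul (hH.sub (.const _))).integrable (κ x)
  filter_upwards [(integral_eq_zero_iff_of_nonneg (fun y => sq_nonneg _) hsq).mp hx] with y hy
  exact sub_eq_zero.mp (pow_eq_zero_iff two_ne_zero |>.mp hy)

lemma IsReversibleMeas.tker_ae_eq_of_isInvariantMeas_density [IsFiniteMeasure m]
    (hrev : IsReversibleMeas κ m) (hH : BddMeasurable H)
    (hinv : ∀ f, BddMeasurable f → ∫ x, Tker κ f x * H x ∂m = ∫ x, f x * H x ∂m) :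
    Tker κ H =ᵐ[m] H :=
  ae_eq_of_forall_integral_mul_eq (hH.tker κ) hH fun f hf => by
    rw [← hrev f H hf hH, hinv f hf]

lemma IsReversibleMeas.of_le_smul [IsFiniteMeasure m] {μ : Measure X} [IsFiniteMeasure μ]
    (hrev : IsReversibleMeas κ m) (hinv : IsInvariantMeas κ μ) {c : ℝ≥0∞} (hc : c ≠ ∞)
    (hle : μ ≤ c • m) : IsReversibleMeas κ μ := by
  obtain ⟨H, hH, hdens⟩ := Measure.exists_bddMeasurable_density_of_le_smul hc hle
  have hTH : Tker κ H =ᵐ[m] H := hrev.tker_ae_eq_of_isInvariantMeas_density hH fun f hf => by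
    rw [← hdens, ← hdens, hinv f hf]
  have hloc := hrev.isInvariantMeas.ae_ae_eq_of_tker_ae_eq hH hTH
  intro f g hf hg
  calc ∫ x, Tker κ f x * g x ∂μ
      = ∫ x, Tker κ f x * (g x * H x) ∂m := by rw [hdens]; simp_rw [mul_assoc]
    _ = ∫ x, f x * Tker κ (fun y => g y * H y) x ∂m := hrev f _ hf (hg.mul hH)
    _ = ∫ x, f x * (Tker κ g x * H x) ∂m :=
        integral_congr_ae ((tker_mul_ae_eq_of_ae_ae_eq hloc g).mono fun x hx => by simp only [hx])
    _ = ∫ x, f x * Tker κ g x ∂μ := by rw [hdens]; simp_rw [mul_assoc]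

end Kernel

/-- If `κ` is a Markov kernel, then an extreme element of the set `ℛ` of reversible
probability measures is an extreme element of the set `ℐ` of invariant probability
measures. -/
theorem extreme_reversible_is_extreme_invariant
    (κ : Kernel X X) [IsMarkovKernel κ] (m : Measure X)
    (hm : IsExtremeElem {μ : Measure X | IsProbabilityMeasure μ ∧ IsReversibleMeas κ μ} m) :
    IsExtremeElem {μ : Measure X | IsProbabilityMeasure μ ∧ IsInvariantMeas κ μ} m := by
  obtain ⟨⟨hmprob, hmrev⟩, hext⟩ := hm
  refine ⟨⟨hmprob, hmrev.isInvariantMeas⟩, ?_⟩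
  rintro t ht m₀ m₁ ⟨h₀p, h₀i⟩ ⟨h₁p, h₁i⟩ hdec
  have hs : ENNReal.ofReal (1 - t) ≠ 0 := by simpa using ht.2
  have ht' : ENNReal.ofReal t ≠ 0 := by simpa using ht.1
  have le₀ : m₀ ≤ (ENNReal.ofReal (1 - t))⁻¹ • m :=
    Measure.le_inv_smul_of_eq_smul_add hs ENNReal.ofReal_ne_top hdec
  have le₁ : m₁ ≤ (ENNReal.ofReal t)⁻¹ • m :=
    Measure.le_inv_smul_of_eq_smul_add ht' ENNReal.ofReal_ne_top (hdec.trans (add_comm _ _))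
  exact hext t ht m₀ m₁
    ⟨h₀p, hmrev.of_le_smul h₀i (ENNReal.inv_ne_top.mpr hs) le₀⟩
    ⟨h₁p, hmrev.of_le_smul h₁i (ENNReal.inv_ne_top.mpr ht') le₁⟩ hdec
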